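/- arXiv:math/0204246 — 7 statements merged into one kernel-verified Lean document; each statement's English description precedes it below -/
import Mathlib

section
/- Let L be a free abelian group of finite rank and V = L ⊗ ℝ. The maps X ↦ X ∩ L and S ↦ (the convex cone generated by S) are mutually inverse bijections between the set of rational convex cones of V (cones generated by a subset of L) and the set of saturated submonoids of L (submonoids S such that nx ∈ S with n ≥ 1 implies x ∈ S). Moreover these bijections preserve the property of being finitely generated. -/
open scoped TensorProduct

/-- A (convex) cone in a real vector space: contains `0`, closed under addition and
scaling by nonnegative reals. -/
def IsConeSet {V : Type} [AddCommGroup V] [Module ℝ V] (T : Set V) : Prop :=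
  (0 : V) ∈ T ∧ (∀ x ∈ T, ∀ y ∈ T, x + y ∈ T) ∧ ∀ c : ℝ, 0 ≤ c → ∀ x ∈ T, c • x ∈ T

/-- The convex cone generated by a subset `S`. -/
def coneGen {V : Type} [AddCommGroup V] [Module ℝ V] (S : Set V) : Set V :=
  ⋂₀ {T : Set V | S ⊆ T ∧ IsConeSet T}

/-- A submonoid `S` of a lattice `L` is saturated if `n • x ∈ S` with `n ≥ 1` implies `x ∈ S`. -/
def IsSaturated {L : Type} [AddCommGroup L] (S : AddSubmonoid L) : Prop :=
  ∀ (x : L) (n : ℕ), 0 < n → n • x ∈ S → x ∈ S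

/-!
A lattice point `x` lies in the real cone spanned by `S ⊆ L` iff some `n • x` with `n > 0` is an
`ℕ`-combination of elements of `S`. Indeed, a relation `1 ⊗ x = ∑ cᵢ ⊗ sᵢ` with real `cᵢ > 0` can
be pushed through `φ ⊗ id` for a `ℚ`-linear form `φ : ℝ → ℚ` that is positive on `1` and on the
`cᵢ` (approximate the coordinates of the identity of `ℝ` in a Hamel basis by rationals); clearing
denominators and using that `L → ℝ ⊗ L` is injective gives `n • x = ∑ eᵢ • sᵢ`.

For Gordan's lemma, write a point of `S` whose cone is spanned by lattice points `v₁, …, vₖ` as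
`∑ tᵢ • vᵢ` with `tᵢ ≥ 0`; splitting off the integer parts of the `tᵢ` leaves a lattice point of
the parallelepiped spanned by the `vᵢ`. These finitely many lattice points generate `S`.
-/

section PointedCone

variable {V : Type} [AddCommGroup V] [Module ℝ V]

theorem PointedCone.isConeSet (C : PointedCone ℝ V) : IsConeSet (C : Set V) :=
  ⟨zero_mem C, fun _ hx _ hy => add_mem hx hy, fun _ hc _ hx => C.smul_mem hc hx⟩

theorem IsConeSet.hull_subset {s T : Set V} (hT : IsConeSet T) (hsT : s ⊆ T) :
    (PointedCone.hull ℝ s : Set V) ⊆ T :=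
  let C : PointedCone ℝ V :=
    { carrier := T, zero_mem' := hT.1, add_mem' := fun ha hb => hT.2.1 _ ha _ hb,
      smul_mem' := fun c x hx => hT.2.2 c c.2 x hx }
  Submodule.span_le (p := C) |>.2 hsT

theorem coneGen_eq_hull (s : Set V) : coneGen s = PointedCone.hull ℝ s :=
  subset_antisymm (Set.sInter_subset_of_mem ⟨PointedCone.subset_hull, PointedCone.isConeSet _⟩)
    (Set.subset_sInter fun _ ⟨hsT, hT⟩ => hT.hull_subset hsT)

end PointedCone

theorem PointedCone.isSaturated_comap {𝕜 V F : Type*} {L : Type} [Field 𝕜] [LinearOrder 𝕜]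
    [IsStrictOrderedRing 𝕜] [AddCommGroup L] [AddCommGroup V] [Module 𝕜 V] [FunLike F L V]
    [AddMonoidHomClass F L V] (C : PointedCone 𝕜 V) (f : F) :
    IsSaturated (C.toAddSubmonoid.comap f) := by
  intro x n hn hx
  rw [AddSubmonoid.mem_comap, map_nsmul, ← Nat.cast_smul_eq_nsmul 𝕜] at hx
  exact (C.smul_mem_iff (Nat.cast_pos.2 hn)).1 hx

theorem Submodule.span_image_preimage_span {R M L : Type*} [Semiring R] [AddCommMonoid M]
    [Module R M] (f : L → M) (s : Set L) :
    span R (f '' (f ⁻¹' span R (f '' s))) = span R (f '' s) :=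
  le_antisymm (span_le.2 (Set.image_preimage_subset _ _))
    (span_mono (Set.image_mono fun _ hx => subset_span (Set.mem_image_of_mem f hx)))

theorem Submodule.span_image_closure {R M L F : Type*} [Semiring R] [AddCommMonoid M]
    [Module R M] [AddCommMonoid L] [FunLike F L M] [AddMonoidHomClass F L M] (f : F)
    (s : Set L) : span R (f '' AddSubmonoid.closure s) = span R (f '' s) := by
  rw [← AddSubmonoid.coe_map, AddMonoidHom.map_mclosure, span_closure]

theorem parallelepiped_subset_hull {V α : Type*} [AddCommGroup V] [Module ℝ V] [Fintype α]
    (v : α → V) : parallelepiped v ⊆ PointedCone.hull ℝ (Set.range v) := by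
  rintro _ ⟨t, ht, rfl⟩
  exact Submodule.sum_mem _ fun i _ =>
    PointedCone.smul_mem _ (ht.1 i) (PointedCone.subset_hull ⟨i, rfl⟩)

theorem exists_ratLinearMap_pos (s : Finset ℝ) :
    ∃ φ : ℝ →ₗ[ℚ] ℚ, ∀ a ∈ s, 0 < a → 0 < φ a := by
  classical
  let b := Module.Basis.ofVectorSpace ℚ ℝ
  -- `ev t` is the `ℚ`-linear form `b j ↦ t j`; `ev b` is the identity of `ℝ`.
  let ev (t : _ → ℝ) (a : ℝ) : ℝ := Finsupp.linearCombination ℚ t (b.repr a)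
  let U := ⋂ a ∈ s.filter (0 < ·), {t | 0 < ev t a}
  have hU : IsOpen U := isOpen_biInter_finset fun a _ => isOpen_lt continuous_const <| by
    simp only [ev, Finsupp.linearCombination_apply, Finsupp.sum]
    fun_prop
  have hbU : ⇑b ∈ U := by simp +contextual [U, ev, b.linearCombination_repr]
  obtain ⟨r, hr⟩ := (DenseRange.piMap fun _ => Rat.denseRange_cast).exists_mem_open hU ⟨_, hbU⟩
  refine ⟨Finsupp.linearCombination ℚ r ∘ₗ b.repr, fun a ha hpos => ?_⟩
  have h : 0 < ev (Pi.map (fun _ => Rat.cast) r) a :=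
    Set.mem_iInter₂.1 hr a (Finset.mem_filter.2 ⟨ha, hpos⟩)
  have hcast :
      ev (Pi.map (fun _ => Rat.cast) r) a = (Finsupp.linearCombination ℚ r (b.repr a) : ℚ) :=
    (Finsupp.apply_linearCombination ℚ (Algebra.linearMap ℚ ℝ) r _).symm
  exact_mod_cast hcast ▸ h

theorem exists_intLinearMap_eq_natCast (s : Finset ℝ) (hs : ∀ a ∈ s, 0 < a) :
    ∃ φ : ℝ →ₗ[ℤ] ℝ, ∀ a ∈ s, ∃ n : ℕ, 0 < n ∧ φ a = n := by
  obtain ⟨ψ, hψ⟩ := exists_ratLinearMap_pos s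
  let D : ℕ := ∏ a ∈ s, (ψ a).den
  refine ⟨D • ((Algebra.linearMap ℚ ℝ ∘ₗ ψ).restrictScalars ℤ), fun a ha => ?_⟩
  obtain ⟨k, hk⟩ : (ψ a).den ∣ D := Finset.dvd_prod_of_mem _ ha
  have hD0 : 0 < D := Finset.prod_pos fun b _ => (ψ b).den_pos
  have hk0 : 0 < k := Nat.pos_of_mul_pos_left (hk ▸ hD0)
  have hnum : 0 < (ψ a).num := Rat.num_pos.2 (hψ a ha (hs a ha))
  obtain ⟨m, hm⟩ := Int.eq_ofNat_of_zero_le hnum.le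
  refine ⟨k * m, Nat.mul_pos hk0 (by omega), ?_⟩
  have hD : (D : ℚ) * ψ a = (k * m : ℕ) := by
    have h : ψ a * (ψ a).den = m := by rw [Rat.mul_den_eq_num, hm, Int.cast_natCast]
    rw [hk]; push_cast; rw [← h]; ring
  change D • ((ψ a : ℚ) : ℝ) = _
  rw [nsmul_eq_mul]
  exact_mod_cast hD

section Lattice

variable {L : Type} [AddCommGroup L]

theorem natCast_tmul {R : Type*} [Ring R] (n : ℕ) (x : L) :
    (n : R) ⊗ₜ[ℤ] x = (1 : R) ⊗ₜ[ℤ] (n • x) := by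
  rw [← TensorProduct.smul_tmul, nsmul_one]

theorem exists_nsmul_mem_of_one_tmul_mem_hull [Module.Flat ℤ L] {S : AddSubmonoid L} {x : L}
    (hx : (1 : ℝ) ⊗ₜ[ℤ] x ∈ PointedCone.hull ℝ (TensorProduct.mk ℤ ℝ L 1 '' S)) :
    ∃ n : ℕ, 0 < n ∧ n • x ∈ S := by
  classical
  obtain ⟨l, hlS, hl⟩ := (Finsupp.mem_span_image_iff_linearCombination _).1 hx
  obtain ⟨φ, hφ⟩ :=
    exists_intLinearMap_eq_natCast (insert 1 (l.support.image fun y => (l y : ℝ)))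
      (by simpa using fun y hy => (l y).2.lt_of_ne fun h => hy (Subtype.ext h.symm))
  obtain ⟨N, hN, hφ1⟩ := hφ 1 (Finset.mem_insert_self _ _)
  choose! e he using fun y (hy : y ∈ l.support) =>
    hφ (l y) (Finset.mem_insert_of_mem (Finset.mem_image_of_mem _ hy))
  refine ⟨N, hN, ?_⟩
  have htmul : (1 : ℝ) ⊗ₜ[ℤ] (N • x) = (1 : ℝ) ⊗ₜ[ℤ] (∑ y ∈ l.support, e y • y) := by
    have h := congrArg (φ.rTensor L) hl
    rw [Finsupp.linearCombination_apply, Finsupp.sum, map_sum] at h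
    rw [← natCast_tmul, ← hφ1, ← LinearMap.rTensor_tmul, ← h, TensorProduct.tmul_sum]
    refine Finset.sum_congr rfl fun y hy => ?_
    rw [← natCast_tmul, ← (he y hy).2, TensorProduct.mk_apply, ← Nonneg.coe_smul,
      TensorProduct.smul_tmul', smul_eq_mul, mul_one, LinearMap.rTensor_tmul]
  rw [Module.Flat.tensorProduct_mk_injective ℤ L ℝ htmul]
  exact AddSubmonoid.sum_mem _ fun y hy => AddSubmonoid.nsmul_mem _ (hlS hy) _

theorem IsSaturated.preimage_hull_eq [Module.Flat ℤ L] {S : AddSubmonoid L}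
    (hS : IsSaturated S) :
    TensorProduct.mk ℤ ℝ L 1 ⁻¹' PointedCone.hull ℝ (TensorProduct.mk ℤ ℝ L 1 '' S) = S :=
  subset_antisymm
    (fun x hx => let ⟨n, hn, hnx⟩ := exists_nsmul_mem_of_one_tmul_mem_hull hx; hS x n hn hnx)
    fun _ hx => PointedCone.subset_hull (Set.mem_image_of_mem _ hx)

theorem finite_preimage_parallelepiped [Module.Free ℤ L] [Module.Finite ℤ L] {α : Type*}
    [Fintype α] (v : α → ℝ ⊗[ℤ] L) :
    (TensorProduct.mk ℤ ℝ L 1 ⁻¹' parallelepiped v).Finite := by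
  classical
  let b := Module.Free.chooseBasis ℤ L
  let B := b.baseChange ℝ
  let R k : ℝ := ∑ i, |B.repr (v i) k|
  refine ((Set.Finite.pi fun k => Set.finite_Icc (-⌈R k⌉) ⌈R k⌉).preimage
    b.equivFun.injective.injOn).subset ?_
  rintro x ⟨t, ht, hx⟩ k -
  have hcoord : (b.repr x k : ℝ) = ∑ i, t i * B.repr (v i) k := by
    simpa [B, Module.Basis.baseChange_repr_tmul] using congrArg (fun w => B.repr w k) hx.symm
  have hbound : |(b.repr x k : ℝ)| ≤ R k := by
    rw [hcoord]
    refine (Finset.abs_sum_le_sum_abs _ _).trans (Finset.sum_le_sum fun i _ => ?_)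
    rw [abs_mul, abs_of_nonneg (ht.1 i)]
    exact mul_le_of_le_one_left (abs_nonneg _) (ht.2 i)
  obtain ⟨hlo, hhi⟩ := abs_le.1 hbound
  rw [Set.mem_Icc, Module.Basis.equivFun_apply]
  refine ⟨(Int.cast_le (R := ℝ)).1 ?_, (Int.cast_le (R := ℝ)).1 ?_⟩ <;> push_cast <;>
    linarith [Int.le_ceil (R k)]

theorem mem_closure_preimage_parallelepiped {α : Type*} [Fintype α] (w : α → L) {x : L}
    (hx : TensorProduct.mk ℤ ℝ L 1 x ∈
      PointedCone.hull ℝ (Set.range (TensorProduct.mk ℤ ℝ L 1 ∘ w))) :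
    x ∈ AddSubmonoid.closure
      (TensorProduct.mk ℤ ℝ L 1 ⁻¹' parallelepiped (TensorProduct.mk ℤ ℝ L 1 ∘ w)) := by
  classical
  set ι := TensorProduct.mk ℤ ℝ L 1
  set P := ι ⁻¹' parallelepiped (ι ∘ w)
  obtain ⟨c, hc⟩ := (Submodule.mem_span_range_iff_exists_fun _).1 hx
  have hwP : ∀ a, w a ∈ P := fun a => (mem_parallelepiped_iff _ _).2
    ⟨Pi.single a 1, ⟨Pi.single_nonneg.2 zero_le_one, fun i => by
      rw [Pi.single_apply]; split_ifs <;> norm_num⟩, by simp [Pi.single_apply]⟩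
  let y := ∑ a, ⌊(c a : ℝ)⌋₊ • w a
  have hxy : x - y ∈ P := by
    refine (mem_parallelepiped_iff _ _).2 ⟨fun a => c a - ⌊(c a : ℝ)⌋₊,
      ⟨fun a => sub_nonneg.2 (Nat.floor_le (c a).2), fun a => ?_⟩, ?_⟩
    · simp only [Pi.one_apply]
      linarith [Nat.lt_floor_add_one (c a : ℝ)]
    · simp only [y, map_sub, map_sum, map_nsmul, ← hc, sub_smul, Finset.sum_sub_distrib,
        Nonneg.coe_smul, Nat.cast_smul_eq_nsmul, Function.comp_apply]
  rw [← sub_add_cancel x y]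
  exact add_mem (AddSubmonoid.subset_closure hxy)
    (sum_mem fun a _ => nsmul_mem (AddSubmonoid.subset_closure (hwP a)) _)

theorem IsSaturated.fg_of_hull_eq [Module.Free ℤ L] [Module.Finite ℤ L] {S : AddSubmonoid L}
    (hS : IsSaturated S) {F : Finset L}
    (hF : PointedCone.hull ℝ (TensorProduct.mk ℤ ℝ L 1 '' S) =
      PointedCone.hull ℝ (TensorProduct.mk ℤ ℝ L 1 '' F)) : S.FG := by
  set ι := TensorProduct.mk ℤ ℝ L 1
  let w : F → L := (↑)
  have hrange : ι '' F = Set.range (ι ∘ w) := by rw [Set.range_comp, Subtype.range_coe]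
  let P := ι ⁻¹' parallelepiped (ι ∘ w)
  have hPS : P ⊆ S := by
    rw [← hS.preimage_hull_eq, hF, hrange]
    exact Set.preimage_mono (parallelepiped_subset_hull _)
  have hP : AddSubmonoid.closure P = S := le_antisymm (AddSubmonoid.closure_le.2 hPS)
    fun x hx => mem_closure_preimage_parallelepiped w
      (hrange ▸ hF ▸ PointedCone.subset_hull (Set.mem_image_of_mem _ hx))
  exact ⟨(finite_preimage_parallelepiped _).toFinset, by rw [Set.Finite.coe_toFinset, hP]⟩

end Lattice

/-- The maps `X ↦ X ∩ L` and `S ↦ coneGen S` are mutually inverse bijections between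
rational convex cones of `V = ℝ ⊗ L` and saturated submonoids of `L`, and they
preserve the property of being finitely generated. -/
theorem rational_cones_correspond_to_saturated_submonoids
    (L : Type) [AddCommGroup L] [Module.Free ℤ L] [Module.Finite ℤ L] :
    let ι : L → ℝ ⊗[ℤ] L := fun x => (1 : ℝ) ⊗ₜ[ℤ] x
    (∀ X : Set (ℝ ⊗[ℤ] L), (∃ S : Set L, X = coneGen (ι '' S)) →
      ∃ S : AddSubmonoid L, IsSaturated S ∧ (S : Set L) = ι ⁻¹' X ∧
        coneGen (ι '' (S : Set L)) = X) ∧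
    (∀ S : AddSubmonoid L, IsSaturated S →
      ι ⁻¹' coneGen (ι '' (S : Set L)) = (S : Set L)) ∧
    (∀ S : AddSubmonoid L, IsSaturated S →
      (S.FG ↔ ∃ F : Finset L, coneGen (ι '' (S : Set L)) = coneGen (ι '' (F : Set L)))) := by
  intro ι
  simp only [coneGen_eq_hull]
  refine ⟨?_, fun S hS => hS.preimage_hull_eq,
    fun S hS => ⟨?_, fun ⟨F, hF⟩ => hS.fg_of_hull_eq (SetLike.coe_injective hF)⟩⟩
  · rintro X ⟨S, rfl⟩
    let C := PointedCone.hull ℝ (ι '' S)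
    exact ⟨C.toAddSubmonoid.comap (TensorProduct.mk ℤ ℝ L 1), C.isSaturated_comap _, rfl,
      congrArg _ (Submodule.span_image_preimage_span ι S)⟩
  · rintro ⟨F, rfl⟩
    exact ⟨F, congrArg _ (Submodule.span_image_closure (TensorProduct.mk ℤ ℝ L 1) _)⟩
end

section
/- Let M be a saturated submonoid of a lattice L. Then every face of M is saturated, the difference group F − F of a face F is a saturated subgroup of L, and F = M ∩ (F − F). -/
/-- `F` is a face of the submonoid `M`. -/
def IsFace {L : Type} [AddCommGroup L] (M F : AddSubmonoid L) : Prop :=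
  F ≤ M ∧ ∀ x ∈ M, x ∉ F → ∀ y ∈ M, x + y ∉ F

/-!
A face `F` of `M` is closed under "summands": if `x, y ∈ M` and `x + y ∈ F` then `x ∈ F`.
Everything follows from this and from writing elements of `F - F` as `a - b` with `a, b ∈ F`.
If `n • x ∈ F`, then `x ∈ M` by saturation of `M`, and `n • x = x + (n - 1) • x` puts `x` in `F`.
If `n • x = a - b`, then `n • (x + b) = a + (n - 1) • b ∈ F`, so `x + b ∈ F` and `x ∈ F - F`.
If `x ∈ M` and `x = a - b`, then `x + b = a ∈ F`, so `x ∈ F`.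
-/

open Pointwise

section

variable {L : Type} [AddCommGroup L] {M F : AddSubmonoid L}

theorem mem_addSubgroupClosure_iff_exists_sub (F : AddSubmonoid L) (x : L) :
    x ∈ AddSubgroup.closure (F : Set L) ↔ ∃ a ∈ F, ∃ b ∈ F, x = a - b := by
  rw [← AddSubgroup.mem_toAddSubmonoid, AddSubgroup.closure_toAddSubmonoid,
    AddSubmonoid.closure_union, AddSubmonoid.closure_eq, ← AddSubmonoid.coe_neg,
    AddSubmonoid.closure_eq, AddSubmonoid.mem_sup]
  constructor
  · rintro ⟨a, ha, c, hc, rfl⟩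
    exact ⟨a, ha, -c, AddSubmonoid.mem_neg.1 hc, by abel⟩
  · rintro ⟨a, ha, b, hb, rfl⟩
    exact ⟨a, ha, -b, AddSubmonoid.mem_neg.2 (by simpa using hb), by abel⟩

theorem IsFace.mem_of_add_mem (hF : IsFace M F) {x y : L} (hx : x ∈ M) (hy : y ∈ M)
    (hxy : x + y ∈ F) : x ∈ F :=
  by_contra fun hxF => hF.2 x hx hxF y hy hxy

theorem IsFace.isSaturated (hM : IsSaturated M) (hF : IsFace M F) : IsSaturated F := by
  intro x n hn hnx
  have hxM : x ∈ M := hM x n hn (hF.1 hnx)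
  obtain ⟨k, rfl⟩ := Nat.exists_eq_succ_of_ne_zero hn.ne'
  rw [succ_nsmul'] at hnx
  exact hF.mem_of_add_mem hxM (M.nsmul_mem hxM k) hnx

theorem IsSaturated.addSubgroupClosure (hF : IsSaturated F) :
    IsSaturated (AddSubgroup.closure (F : Set L)).toAddSubmonoid := by
  intro x n hn hnx
  obtain ⟨k, rfl⟩ := Nat.exists_eq_succ_of_ne_zero hn.ne'
  obtain ⟨a, ha, b, hb, hab⟩ := (mem_addSubgroupClosure_iff_exists_sub F _).1 hnx
  have hxb : (k + 1) • (x + b) = a + k • b := by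
    rw [smul_add, hab, succ_nsmul' b k]
    abel
  have hxbF : x + b ∈ F :=
    hF _ (k + 1) k.succ_pos (hxb ▸ F.add_mem ha (F.nsmul_mem hb k))
  exact (mem_addSubgroupClosure_iff_exists_sub F x).2 ⟨x + b, hxbF, b, hb, by abel⟩

theorem IsFace.coe_eq_inter_addSubgroupClosure (hF : IsFace M F) :
    (F : Set L) = (M : Set L) ∩ (AddSubgroup.closure (F : Set L) : Set L) := by
  refine subset_antisymm (fun x hx => ⟨hF.1 hx, AddSubgroup.subset_closure hx⟩) ?_
  rintro x ⟨hxM, hx⟩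
  obtain ⟨a, ha, b, hb, rfl⟩ := (mem_addSubgroupClosure_iff_exists_sub F x).1 hx
  exact hF.mem_of_add_mem hxM (hF.1 hb) (by simpa using ha)

end

theorem face_of_saturated_monoid_general
    (L : Type) [AddCommGroup L]
    (M F : AddSubmonoid L) (hM : IsSaturated M) (hF : IsFace M F) :
    IsSaturated F ∧
    (∀ (x : L) (n : ℕ), 0 < n → n • x ∈ AddSubgroup.closure (F : Set L) →
      x ∈ AddSubgroup.closure (F : Set L)) ∧
    (F : Set L) = (M : Set L) ∩ (AddSubgroup.closure (F : Set L) : Set L) :=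
  ⟨hF.isSaturated hM, (hF.isSaturated hM).addSubgroupClosure, hF.coe_eq_inter_addSubgroupClosure⟩

/-- If `M` is a saturated submonoid of a lattice `L` and `F` is a face of `M`, then `F`
is saturated, the hull `F - F` (the subgroup generated by `F`) is a saturated subgroup of
`L`, and `F = M ∩ (F - F)`. -/
theorem face_of_saturated_monoid
    (L : Type) [AddCommGroup L] [Module.Free ℤ L] [Module.Finite ℤ L]
    (M F : AddSubmonoid L) (hM : IsSaturated M) (hF : IsFace M F) :
    IsSaturated F ∧
    (∀ (x : L) (n : ℕ), 0 < n → n • x ∈ AddSubgroup.closure (F : Set L) →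
      x ∈ AddSubgroup.closure (F : Set L)) ∧
    (F : Set L) = (M : Set L) ∩ (AddSubgroup.closure (F : Set L) : Set L) :=
  face_of_saturated_monoid_general L M F hM hF
end

section
/- Let M be a submonoid of a lattice L and F a face of M. Then the faces of the dual face M − F (the submonoid of L generated by M ∪ (−F)) are exactly the monoids G − F where G is a face of M containing F. -/
/-- The dual face `M - F`: the submonoid of `L` generated by `M ∪ (-F)`. -/
def dualFace {L : Type} [AddCommGroup L] (M F : AddSubmonoid L) : AddSubmonoid L :=
  AddSubmonoid.closure ((M : Set L) ∪ (-(F : Set L)))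

/-!
A face `H` of `M - F` contains every `x` with `x, -x ∈ M - F`, in particular `F` and `-F`;
hence `H = G - F` for the face `G = M ∩ H` of `M`. Conversely, if `G ⊇ F` is a face of `M` and
`(m - f) + (m' - f') = g - f''`, then `m + (m' + f'') = g + f + f' ∈ G`, so `m ∈ G`.
-/

variable {L : Type} [AddCommGroup L]

namespace IsFace

variable {M G : AddSubmonoid L}

lemma mem_of_add_mem_s3 (hG : IsFace M G) {a b : L} (ha : a ∈ M) (hb : b ∈ M) (hab : a + b ∈ G) :
    a ∈ G := by
  by_contra h
  exact hG.2 a ha h b hb hab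

lemma mem_of_neg_mem (hG : IsFace M G) {x : L} (hx : x ∈ M) (hnx : -x ∈ M) : x ∈ G :=
  hG.mem_of_add_mem_s3 hx hnx (by simp)

lemma inf {N : AddSubmonoid L} (hG : IsFace N G) (hMN : M ≤ N) : IsFace M (M ⊓ G) :=
  ⟨inf_le_left, fun _ hx hxG _ hy hxy =>
    hxG ⟨hx, hG.mem_of_add_mem_s3 (hMN hx) (hMN hy) hxy.2⟩⟩

end IsFace

section dualFace

variable {M F : AddSubmonoid L}

lemma le_dualFace : M ≤ dualFace M F :=
  fun _ hm => AddSubmonoid.subset_closure (Or.inl hm)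

lemma neg_mem_dualFace {f : L} (hf : f ∈ F) : -f ∈ dualFace M F :=
  AddSubmonoid.subset_closure (Or.inr (by simpa using hf))

lemma dualFace_mono_left {G : AddSubmonoid L} (hGM : G ≤ M) : dualFace G F ≤ dualFace M F :=
  AddSubmonoid.closure_mono (Set.union_subset_union hGM le_rfl)

lemma mem_dualFace {x : L} : x ∈ dualFace M F ↔ ∃ m ∈ M, ∃ f ∈ F, x = m - f := by
  constructor
  · intro hx
    induction hx using AddSubmonoid.closure_induction with
    | mem y hy =>
      rcases hy with hy | hy
      · exact ⟨y, hy, 0, F.zero_mem, by simp⟩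
      · exact ⟨0, M.zero_mem, -y, by simpa using hy, by simp⟩
    | zero => exact ⟨0, M.zero_mem, 0, F.zero_mem, by simp⟩
    | add a b _ _ iha ihb =>
      obtain ⟨m, hm, f, hf, rfl⟩ := iha
      obtain ⟨m', hm', f', hf', rfl⟩ := ihb
      exact ⟨m + m', M.add_mem hm hm', f + f', F.add_mem hf hf', by abel⟩
  · rintro ⟨m, hm, f, hf, rfl⟩
    simpa [sub_eq_add_neg] using (dualFace M F).add_mem (le_dualFace hm) (neg_mem_dualFace hf)

lemma sub_mem_dualFace {m f : L} (hm : m ∈ M) (hf : f ∈ F) : m - f ∈ dualFace M F :=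
  mem_dualFace.2 ⟨m, hm, f, hf, rfl⟩

lemma IsFace.isFace_dualFace {G : AddSubmonoid L} (hG : IsFace M G) (hFG : F ≤ G) :
    IsFace (dualFace M F) (dualFace G F) := by
  refine ⟨dualFace_mono_left hG.1, ?_⟩
  intro x hx hxG y hy hxy
  obtain ⟨m, hm, f, hf, rfl⟩ := mem_dualFace.1 hx
  obtain ⟨m', hm', f', hf', rfl⟩ := mem_dualFace.1 hy
  obtain ⟨g, hg, f'', hf'', hsum⟩ := mem_dualFace.1 hxy
  have hmG : m ∈ G := by
    refine hG.mem_of_add_mem_s3 hm (M.add_mem hm' (hG.1 (hFG hf''))) ?_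
    have : m + (m' + f'') = g + (f + f') := by
      rw [← add_assoc, ← sub_eq_sub_iff_add_eq_add, ← hsum]
      abel
    rw [this]
    exact G.add_mem hg (G.add_mem (hFG hf) (hFG hf'))
  exact hxG (sub_mem_dualFace hmG hf)

lemma IsFace.le_of_dualFace {H : AddSubmonoid L} (hH : IsFace (dualFace M F) H)
    (hFM : F ≤ M) : F ≤ H :=
  fun _ hf => hH.mem_of_neg_mem (le_dualFace (hFM hf)) (neg_mem_dualFace hf)

lemma IsFace.eq_dualFace_inf {H : AddSubmonoid L} (hH : IsFace (dualFace M F) H)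
    (hFM : F ≤ M) : H = dualFace (M ⊓ H) F := by
  have hFH := hH.le_of_dualFace hFM
  have hnegFH : ∀ {f}, f ∈ F → -f ∈ H := fun hf =>
    hH.mem_of_neg_mem (neg_mem_dualFace hf) (by simpa using le_dualFace (hFM hf))
  apply le_antisymm
  · intro x hx
    obtain ⟨m, hm, f, hf, rfl⟩ := mem_dualFace.1 (hH.1 hx)
    have hmH : m ∈ H := by simpa using H.add_mem hx (hFH hf)
    exact sub_mem_dualFace ⟨hm, hmH⟩ hf
  · refine AddSubmonoid.closure_le.2 ?_
    rintro z (hz | hz)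
    · exact hz.2
    · simpa using hnegFH (show -z ∈ F by simpa using hz)

end dualFace

theorem faces_of_dual_face_general
    (L : Type) [AddCommGroup L]
    (M F : AddSubmonoid L) (hF : IsFace M F) (H : AddSubmonoid L) :
    IsFace (dualFace M F) H ↔
      ∃ G : AddSubmonoid L, IsFace M G ∧ F ≤ G ∧ H = dualFace G F := by
  constructor
  · intro hH
    exact ⟨M ⊓ H, hH.inf le_dualFace, le_inf hF.1 (hH.le_of_dualFace hF.1),
      hH.eq_dualFace_inf hF.1⟩
  · rintro ⟨G, hG, hFG, rfl⟩
    exact hG.isFace_dualFace hFG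

/-- The faces of the dual face `M - F` are exactly the monoids `G - F` where `G` is a
face of `M` containing `F`. -/
theorem faces_of_dual_face
    (L : Type) [AddCommGroup L] [Module.Free ℤ L] [Module.Finite ℤ L]
    (M F : AddSubmonoid L) (hF : IsFace M F) (H : AddSubmonoid L) :
    IsFace (dualFace M F) H ↔
      ∃ G : AddSubmonoid L, IsFace M G ∧ F ≤ G ∧ H = dualFace G F :=
  faces_of_dual_face_general L M F hF H
end

section
/- Let M be a saturated submonoid of a lattice of finite rank and K an infinite field. In the monoid M̃ := Hom_monoid((M,+),(K,·)) (pointwise multiplication): (1) the unit group of M̃ is T(M) := {α : α⁻¹(K^×) = M}; (2) the idempotents of M̃ are exactly the elements e(F), F a face of M, where e(F)(m) = 1 if m ∈ F and 0 otherwise; (3) M̃ = T(M)·E where E is the set of idempotents. -/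
open Multiplicative

theorem MonoidHom.isUnit_iff_forall_isUnit {M N : Type*} [Monoid M] [CommMonoid N]
    (φ : M →* N) : IsUnit φ ↔ ∀ m, IsUnit (φ m) := by
  refine ⟨fun h m => h.map (MonoidHom.eval m), fun h => ?_⟩
  let ψ : M →* Nˣ := IsUnit.liftRight φ h
  refine ⟨⟨φ, (Units.coeHom N).comp ψ⁻¹, ?_, ?_⟩, rfl⟩ <;>
    ext m <;> simp [ψ]

theorem AddSubgroup.mem_closure_addSubmonoid {A : Type*} [AddCommGroup A] (S : AddSubmonoid A)
    {x : A} : x ∈ AddSubgroup.closure (S : Set A) ↔ ∃ a ∈ S, ∃ b ∈ S, x = a - b := by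
  refine ⟨fun hx => ?_, fun ⟨a, ha, b, hb, hx⟩ =>
    hx ▸ sub_mem (subset_closure ha) (subset_closure hb)⟩
  induction hx using AddSubgroup.closure_induction with
  | mem x hx => exact ⟨x, hx, 0, S.zero_mem, (sub_zero x).symm⟩
  | zero => exact ⟨0, S.zero_mem, 0, S.zero_mem, (sub_zero 0).symm⟩
  | add x y _ _ hx hy =>
    obtain ⟨a, ha, b, hb, rfl⟩ := hx
    obtain ⟨c, hc, d, hd, rfl⟩ := hy
    exact ⟨a + c, S.add_mem ha hc, b + d, S.add_mem hb hd, by abel⟩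
  | neg x _ hx =>
    obtain ⟨a, ha, b, hb, rfl⟩ := hx
    exact ⟨b, hb, a, ha, neg_sub a b⟩

theorem AddSubmonoid.exists_extend_to_closure {A B : Type*} [AddCommGroup A] [CommGroup B]
    (S : AddSubmonoid A) (f : Multiplicative S →* B) :
    ∃ g : Multiplicative (AddSubgroup.closure (S : Set A)) →* B,
      ∀ s : S, g (ofAdd ⟨s, AddSubgroup.subset_closure s.2⟩) = f (ofAdd s) := by
  let i : Multiplicative S →* Multiplicative (AddSubgroup.closure (S : Set A)) :=
    AddMonoidHom.toMultiplicative (S.subtype.codRestrict _ fun s => AddSubgroup.subset_closure s.2)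
  have hi : (⊤ : Submonoid (Multiplicative S)).IsLocalizationMap i := by
    refine Submonoid.isLocalizationMap_of_group (fun x y hxy => ?_) fun g => ?_
    · exact Subtype.ext (congrArg Subtype.val hxy :)
    · obtain ⟨a, ha, b, hb, hg⟩ := (AddSubgroup.mem_closure_addSubmonoid S).mp (toAdd g).2
      exact ⟨ofAdd ⟨a, ha⟩, ofAdd ⟨b, hb⟩, Submonoid.mem_top _, Subtype.ext hg⟩
  let ℓ : (⊤ : Submonoid (Multiplicative S)).LocalizationMap _ := ⟨i.toMulHom, hi⟩
  exact ⟨ℓ.lift fun _ => Group.isUnit _, fun s => ℓ.lift_eq _ (ofAdd s)⟩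

theorem Submodule.exists_retraction_of_projective_quotient {R L : Type*} [Ring R]
    [AddCommGroup L] [Module R L] (G : Submodule R L) [Module.Projective R (L ⧸ G)] :
    ∃ r : L →ₗ[R] G, ∀ x : G, r x = x := by
  obtain ⟨s, hs⟩ := G.mkQ.exists_rightInverse_of_surjective G.range_mkQ
  have hs' : ∀ y, Submodule.Quotient.mk (s y) = y := LinearMap.congr_fun hs
  refine ⟨LinearMap.codRestrict G (LinearMap.id - s ∘ₗ G.mkQ) fun x => ?_, fun x => ?_⟩
  · rw [← Submodule.Quotient.mk_eq_zero]
    simp [hs']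
  · ext
    simp [(Submodule.Quotient.mk_eq_zero G).mpr x.2]

theorem AddSubgroup.exists_retraction_of_nsmul_mem {L : Type*} [AddCommGroup L]
    [Module.Finite ℤ L] (G : AddSubgroup L)
    (hG : ∀ (n : ℕ) (x : L), 0 < n → n • x ∈ G → x ∈ G) :
    ∃ r : L →+ G, ∀ x : G, r x = x := by
  have : Module.IsTorsionFree ℤ (L ⧸ G.toIntSubmodule) := by
    refine .of_smul_eq_zero fun n y hy => or_iff_not_imp_left.mpr fun hn => ?_
    obtain ⟨x, rfl⟩ := Submodule.Quotient.mk_surjective _ y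
    rw [← Submodule.Quotient.mk_smul, Submodule.Quotient.mk_eq_zero] at hy
    rw [Submodule.Quotient.mk_eq_zero]
    refine hG n.natAbs x (Int.natAbs_pos.mpr hn) ?_
    rcases Int.natAbs_eq n with h | h <;> rw [h] at hy
    · rw [natCast_zsmul] at hy
      exact hy
    · rw [neg_smul, natCast_zsmul, neg_mem_iff] at hy
      exact hy
  obtain ⟨r, hr⟩ := G.toIntSubmodule.exists_retraction_of_projective_quotient
  exact ⟨r.toAddMonoidHom, hr⟩

section Faces

variable {L : Type} [AddCommGroup L] {M F : AddSubmonoid L}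

theorem IsFace.add_mem_iff (hF : IsFace M F) {x y : L} (hx : x ∈ M) (hy : y ∈ M) :
    x + y ∈ F ↔ x ∈ F ∧ y ∈ F := by
  refine ⟨fun hxy => ⟨?_, ?_⟩, fun ⟨hxF, hyF⟩ => F.add_mem hxF hyF⟩
  · exact not_not.mp fun hxF => hF.2 x hx hxF y hy hxy
  · exact not_not.mp fun hyF => hF.2 y hy hyF x hx (add_comm x y ▸ hxy)

theorem IsFace.mem_of_nsmul_mem (hF : IsFace M F) {x : L} (hx : x ∈ M) {n : ℕ} (hn : 0 < n)
    (h : n • x ∈ F) : x ∈ F := by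
  obtain ⟨k, rfl⟩ := Nat.exists_eq_add_one_of_ne_zero hn.ne'
  rw [succ_nsmul', hF.add_mem_iff hx (nsmul_mem hx k)] at h
  exact h.1

/-- `n • x = a - b` with `a, b ∈ F` gives `n • (x + b) = a + (n - 1) • b ∈ F ⊆ M`; saturation
puts `x + b` in `M`, and then in `F` because `F` is a face. -/
theorem IsSaturated.mem_closure_of_nsmul_mem (hM : IsSaturated M) (hF : IsFace M F) {x : L}
    {n : ℕ} (hn : 0 < n) (h : n • x ∈ AddSubgroup.closure (F : Set L)) :
    x ∈ AddSubgroup.closure (F : Set L) := by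
  obtain ⟨a, ha, b, hb, hab⟩ := (AddSubgroup.mem_closure_addSubmonoid F).mp h
  obtain ⟨k, rfl⟩ := Nat.exists_eq_add_one_of_ne_zero hn.ne'
  have hsum : (k + 1) • (x + b) ∈ F := by
    have : (k + 1) • (x + b) = a + k • b := by
      rw [nsmul_add, hab, succ_nsmul]
      abel
    exact this ▸ F.add_mem ha (nsmul_mem hb k)
  have hxb : x + b ∈ F := hF.mem_of_nsmul_mem (hM _ _ hn (hF.1 hsum)) hn hsum
  rw [AddSubgroup.mem_closure_addSubmonoid F]
  exact ⟨x + b, hxb, b, hb, (add_sub_cancel_right x b).symm⟩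

end Faces

section Characters

variable {L : Type} [AddCommGroup L] {M : AddSubmonoid L} {K : Type*}

/-- The support `φ⁻¹(Kˣ)` of a character, viewed in `L`. -/
def charSupport [CommMonoidWithZero K] [NoZeroDivisors K] [Nontrivial K]
    (φ : Multiplicative M →* K) : AddSubmonoid L where
  carrier := {x | ∃ h : x ∈ M, φ (ofAdd ⟨x, h⟩) ≠ 0}
  zero_mem' := ⟨M.zero_mem, (φ.map_one).symm ▸ one_ne_zero⟩
  add_mem' := fun ⟨ha, hφa⟩ ⟨hb, hφb⟩ =>
    ⟨M.add_mem ha hb, (map_mul φ (ofAdd ⟨_, ha⟩) (ofAdd ⟨_, hb⟩)).symm ▸ mul_ne_zero hφa hφb⟩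

open Classical in
/-- The idempotent `e(F)`. -/
noncomputable def faceIndicator [CommMonoidWithZero K] {F : AddSubmonoid L} (hF : IsFace M F) :
    Multiplicative M →* K where
  toFun m := if ((toAdd m : M) : L) ∈ F then 1 else 0
  map_one' := if_pos F.zero_mem
  map_mul' a b := by
    simp only [toAdd_mul, AddSubmonoid.coe_add,
      hF.add_mem_iff (toAdd a : M).2 (toAdd b : M).2, ite_and, ite_mul, one_mul, zero_mul]

section Indicator

variable [CommMonoidWithZero K] {F : AddSubmonoid L} (hF : IsFace M F) {m : M}

theorem faceIndicator_of_mem (hm : (m : L) ∈ F) : faceIndicator (K := K) hF (ofAdd m) = 1 :=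
  if_pos hm

theorem faceIndicator_of_notMem (hm : (m : L) ∉ F) : faceIndicator (K := K) hF (ofAdd m) = 0 :=
  if_neg hm

theorem isIdempotentElem_faceIndicator : IsIdempotentElem (faceIndicator (K := K) hF) := by
  refine MonoidHom.ext fun m => ?_
  obtain ⟨m, rfl⟩ := ofAdd.surjective m
  by_cases hm : (m : L) ∈ F
  · simp [MonoidHom.mul_apply, faceIndicator_of_mem hF hm]
  · simp [MonoidHom.mul_apply, faceIndicator_of_notMem hF hm]

end Indicator

section Support

variable [CommMonoidWithZero K] [NoZeroDivisors K] [Nontrivial K] {φ : Multiplicative M →* K}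
  {m : M}

theorem coe_mem_charSupport : (m : L) ∈ charSupport φ ↔ φ (ofAdd m) ≠ 0 :=
  ⟨fun ⟨_, h⟩ => h, fun h => ⟨m.2, h⟩⟩

theorem apply_eq_zero_of_notMem_charSupport (hm : (m : L) ∉ charSupport φ) :
    φ (ofAdd m) = 0 :=
  not_not.mp (mt coe_mem_charSupport.mpr hm)

variable (φ) in
theorem isFace_charSupport : IsFace M (charSupport φ) := by
  refine ⟨fun x ⟨hx, _⟩ => hx, fun x hx hxF y hy ⟨hxy, hne⟩ => hne ?_⟩
  change φ (ofAdd ⟨x, hx⟩ * ofAdd ⟨y, hy⟩) = 0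
  rw [map_mul, apply_eq_zero_of_notMem_charSupport hxF, zero_mul]

theorem apply_eq_one_of_mul_self [IsLeftCancelMulZero K] (h : φ * φ = φ)
    (hm : (m : L) ∈ charSupport φ) : φ (ofAdd m) = 1 := by
  refine mul_left_cancel₀ (coe_mem_charSupport.mp hm) ?_
  rw [mul_one, ← MonoidHom.mul_apply, h]

theorem eq_mul_faceIndicator_charSupport (u : Multiplicative M →* K)
    (hu : ∀ m : M, (m : L) ∈ charSupport φ → u (ofAdd m) = φ (ofAdd m)) :
    φ = u * faceIndicator (isFace_charSupport φ) := by
  refine MonoidHom.ext fun m => ?_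
  obtain ⟨m, rfl⟩ := ofAdd.surjective m
  rw [MonoidHom.mul_apply]
  by_cases hm : (m : L) ∈ charSupport φ
  · rw [faceIndicator_of_mem _ hm, mul_one, hu _ hm]
  · rw [faceIndicator_of_notMem _ hm, mul_zero]
    exact apply_eq_zero_of_notMem_charSupport hm

end Support

theorem exists_isUnit_eqOn_charSupport [Module.Finite ℤ L] [CommGroupWithZero K]
    (hM : IsSaturated M) (φ : Multiplicative M →* K) :
    ∃ u : Multiplicative M →* K, IsUnit u ∧
      ∀ m : M, (m : L) ∈ charSupport φ → u (ofAdd m) = φ (ofAdd m) := by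
  set F := charSupport φ
  have hF : IsFace M F := isFace_charSupport φ
  obtain ⟨r, hr⟩ := (AddSubgroup.closure (F : Set L)).exists_retraction_of_nsmul_mem
    fun _ _ hn hx => hM.mem_closure_of_nsmul_mem hF hn hx
  let φF : Multiplicative F →* Kˣ :=
    IsUnit.liftRight (φ.comp (AddSubmonoid.inclusion hF.1).toMultiplicative) fun m =>
      isUnit_iff_ne_zero.mpr <|
        (coe_mem_charSupport (m := AddSubmonoid.inclusion hF.1 (toAdd m))).mp (toAdd m).2
  obtain ⟨χ, hχ⟩ := F.exists_extend_to_closure φF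
  refine ⟨(Units.coeHom K).comp (χ.comp (r.comp M.subtype).toMultiplicative),
    (MonoidHom.isUnit_iff_forall_isUnit _).mpr fun _ => Units.isUnit _, fun m hm => ?_⟩
  have hrm : r m = ⟨m, AddSubgroup.subset_closure hm⟩ := hr ⟨m, _⟩
  change ((χ (ofAdd (r m)) : Kˣ) : K) = φ (ofAdd m)
  rw [hrm, hχ ⟨m, hm⟩]
  rfl

end Characters

theorem characters_of_saturated_monoid_general
    (L : Type) [AddCommGroup L] [Module.Finite ℤ L]
    (K : Type) [Field K]
    (M : AddSubmonoid L) (hM : IsSaturated M) :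
    (∀ φ : Multiplicative M →* K, IsUnit φ ↔ ∀ m : Multiplicative M, φ m ≠ 0) ∧
    (∀ φ : Multiplicative M →* K, φ * φ = φ ↔
      ∃ F : AddSubmonoid L, IsFace M F ∧
        ∀ m : M, ((m : L) ∈ F → φ (Multiplicative.ofAdd m) = 1) ∧
          ((m : L) ∉ F → φ (Multiplicative.ofAdd m) = 0)) ∧
    (∀ φ : Multiplicative M →* K, ∃ u e : Multiplicative M →* K,
      IsUnit u ∧ e * e = e ∧ φ = u * e) := by
  refine ⟨fun φ => by simp only [φ.isUnit_iff_forall_isUnit, isUnit_iff_ne_zero],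
    fun φ => ⟨fun h => ?_, fun ⟨F, _, hF⟩ => ?_⟩, fun φ => ?_⟩
  · exact ⟨charSupport φ, isFace_charSupport φ,
      fun m => ⟨apply_eq_one_of_mul_self h, apply_eq_zero_of_notMem_charSupport⟩⟩
  · refine MonoidHom.ext fun m => ?_
    obtain ⟨m, rfl⟩ := ofAdd.surjective m
    rw [MonoidHom.mul_apply]
    by_cases hm : (m : L) ∈ F
    · rw [(hF m).1 hm, one_mul]
    · rw [(hF m).2 hm, zero_mul]
  · obtain ⟨u, hu, huφ⟩ := exists_isUnit_eqOn_charSupport hM φ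
    exact ⟨u, _, hu, isIdempotentElem_faceIndicator _, eq_mul_faceIndicator_charSupport u huφ⟩

/-- For a saturated submonoid `M` of a lattice of finite rank and an infinite field `K`,
consider the monoid `M̃ = Hom((M,+),(K,·))` under pointwise multiplication.  Then:
(1) the unit group of `M̃` is `T(M) = {α : α⁻¹(Kˣ) = M}`, i.e. the nowhere vanishing
homomorphisms; (2) the idempotents of `M̃` are exactly the elements `e(F)` for `F` a face
of `M`, where `e(F)` is `1` on `F` and `0` on `M \ F`; (3) `M̃ = T(M) · E`. -/
theorem characters_of_saturated_monoid
    (L : Type) [AddCommGroup L] [Module.Free ℤ L] [Module.Finite ℤ L]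
    (K : Type) [Field K] [Infinite K]
    (M : AddSubmonoid L) (hM : IsSaturated M) :
    (∀ φ : Multiplicative M →* K, IsUnit φ ↔ ∀ m : Multiplicative M, φ m ≠ 0) ∧
    (∀ φ : Multiplicative M →* K, φ * φ = φ ↔
      ∃ F : AddSubmonoid L, IsFace M F ∧
        ∀ m : M, ((m : L) ∈ F → φ (Multiplicative.ofAdd m) = 1) ∧
          ((m : L) ∉ F → φ (Multiplicative.ofAdd m) = 0)) ∧
    (∀ φ : Multiplicative M →* K, ∃ u e : Multiplicative M →* K,
      IsUnit u ∧ e * e = e ∧ φ = u * e) :=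
  characters_of_saturated_monoid_general L K M hM
end

section
/- Let M be a saturated submonoid of a lattice of finite rank and K an infinite field. For each face F of M, the set T(F) := {α ∈ M̃ : α⁻¹(K^×) = F} is a group under pointwise multiplication with identity e(F), and the map Φ_F from Hom(F−F, K^×) to T(F) sending α to the extension by zero (Φ_F(α)(m) = α(m) for m ∈ F, and 0 for m ∈ M \ F) is a group isomorphism. -/
/-!
Because `F` is a face, `m + n ∈ F` holds iff both `m` and `n` lie in `F`, so extending a
multiplicative map on `F` by zero gives a monoid map on `M`, and the elements of `T(F)` are exactly
the extensions by zero of `Kˣ`-valued maps on `F`. As `F − F` is the Grothendieck group of `F`,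
restriction identifies these maps with the characters of `F − F`. Extension by zero
turns products of characters into pointwise products, so the group structure of `Hom(F − F, Kˣ)`
is carried to `T(F)`, with identity `Φ_F 1 = e(F)`.
-/

section

variable {L : Type} [AddCommGroup L]

theorem AddSubmonoid.exists_sub_eq_of_mem_closure {F : AddSubmonoid L} {x : L}
    (hx : x ∈ AddSubgroup.closure (F : Set L)) : ∃ a ∈ F, ∃ b ∈ F, a - b = x := by
  induction hx using AddSubgroup.closure_induction with
  | mem a ha => exact ⟨a, ha, 0, F.zero_mem, sub_zero a⟩
  | zero => exact ⟨0, F.zero_mem, 0, F.zero_mem, sub_zero 0⟩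
  | add _ _ _ _ ihx ihy =>
    obtain ⟨a, ha, b, hb, rfl⟩ := ihx
    obtain ⟨c, hc, d, hd, rfl⟩ := ihy
    exact ⟨a + c, add_mem ha hc, b + d, add_mem hb hd, by abel⟩
  | neg _ _ ih =>
    obtain ⟨a, ha, b, hb, rfl⟩ := ih
    exact ⟨b, hb, a, ha, (neg_sub a b).symm⟩

def AddSubmonoid.closureLocalizationMap (F : AddSubmonoid L) :
    Submonoid.LocalizationMap (⊤ : Submonoid (Multiplicative F))
      (Multiplicative (AddSubgroup.closure (F : Set L))) where
  toFun a := .ofAdd ⟨(a.toAdd : L), AddSubgroup.subset_closure a.toAdd.2⟩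
  map_mul' _ _ := rfl
  isLocalizationMap :=
    { map_units := fun _ => Group.isUnit _
      surj := fun z => by
        obtain ⟨a, ha, b, hb, hab⟩ := F.exists_sub_eq_of_mem_closure z.toAdd.2
        refine ⟨⟨.ofAdd ⟨a, ha⟩, ⟨.ofAdd ⟨b, hb⟩, Submonoid.mem_top _⟩⟩, ?_⟩
        exact Subtype.ext (show (z.toAdd : L) + b = a by rw [← hab, sub_add_cancel])
      exists_of_eq := fun h => ⟨1, congrArg _ (Subtype.ext congr(($h).toAdd.1))⟩ }

namespace IsFace

variable {M F : AddSubmonoid L} {K : Type*}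

theorem add_mem_iff_s5 (hF : IsFace M F) {m n : L} (hm : m ∈ M) (hn : n ∈ M) :
    m + n ∈ F ↔ m ∈ F ∧ n ∈ F :=
  ⟨fun h => ⟨by_contra fun hmF => hF.2 m hm hmF n hn h,
      by_contra fun hnF => hF.2 n hn hnF m hm (add_comm m n ▸ h)⟩,
    fun h => add_mem h.1 h.2⟩

variable (hF : IsFace M F)

section MonoidWithZero

variable [MonoidWithZero K]

open Classical in
noncomputable def extendByZero (χ : Multiplicative F →* K) : Multiplicative M →* K where
  toFun m := if h : (m.toAdd : L) ∈ F then χ (.ofAdd ⟨m.toAdd, h⟩) else 0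
  map_one' := (dif_pos F.zero_mem).trans χ.map_one
  map_mul' m n := by
    have hmn : ((m * n).toAdd : L) ∈ F ↔ _ := hF.add_mem_iff_s5 m.toAdd.2 n.toAdd.2
    by_cases hm : (m.toAdd : L) ∈ F
    · by_cases hn : (n.toAdd : L) ∈ F
      · rw [dif_pos (hmn.2 ⟨hm, hn⟩), dif_pos hm, dif_pos hn, ← map_mul]
        rfl
      · rw [dif_neg fun h => hn (hmn.1 h).2, dif_neg hn, mul_zero]
    · rw [dif_neg fun h => hm (hmn.1 h).1, dif_neg hm, zero_mul]

theorem extendByZero_apply_of_mem (χ : Multiplicative F →* K) (m : M) (h : (m : L) ∈ F) :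
    hF.extendByZero χ (.ofAdd m) = χ (.ofAdd ⟨m, h⟩) :=
  dif_pos h

theorem extendByZero_apply_of_notMem (χ : Multiplicative F →* K) (m : M) (h : (m : L) ∉ F) :
    hF.extendByZero χ (.ofAdd m) = 0 :=
  dif_neg h

theorem extendByZero_injective : Function.Injective (hF.extendByZero (K := K)) :=
  fun _ _ h => MonoidHom.ext fun a => by
    have := DFunLike.congr_fun h (.ofAdd ⟨a.toAdd, hF.1 a.toAdd.2⟩)
    rwa [hF.extendByZero_apply_of_mem _ _ a.toAdd.2,
      hF.extendByZero_apply_of_mem _ _ a.toAdd.2] at this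

/-- The map `Φ_F`. -/
noncomputable def extendChar (α : Multiplicative (AddSubgroup.closure (F : Set L)) →* Kˣ) :
    Multiplicative M →* K :=
  hF.extendByZero ((Units.coeHom K).comp (α.comp F.closureLocalizationMap.toMonoidHom))

variable (α : Multiplicative (AddSubgroup.closure (F : Set L)) →* Kˣ) (m : M)

theorem extendChar_apply_of_mem (h : (m : L) ∈ F) :
    hF.extendChar α (.ofAdd m) = α (.ofAdd ⟨(m : L), AddSubgroup.subset_closure h⟩) :=
  hF.extendByZero_apply_of_mem _ m h

theorem extendChar_apply_of_notMem (h : (m : L) ∉ F) : hF.extendChar α (.ofAdd m) = 0 :=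
  hF.extendByZero_apply_of_notMem _ m h

theorem extendChar_injective : Function.Injective (hF.extendChar (K := K)) :=
  fun _ _ h => F.closureLocalizationMap.epic_of_localizationMap <|
    (MonoidHom.cancel_left Units.val_injective).1 (hF.extendByZero_injective h)

end MonoidWithZero

theorem extendByZero_mul [CommMonoidWithZero K] (χ ψ : Multiplicative F →* K) :
    hF.extendByZero (χ * ψ) = hF.extendByZero χ * hF.extendByZero ψ := by
  refine MonoidHom.ext fun x => ?_
  obtain ⟨m, rfl⟩ := Multiplicative.ofAdd.surjective x
  by_cases h : (m : L) ∈ F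
  · simp only [MonoidHom.mul_apply, hF.extendByZero_apply_of_mem _ m h]
  · simp only [MonoidHom.mul_apply, hF.extendByZero_apply_of_notMem _ m h, mul_zero]

theorem extendChar_mul [CommMonoidWithZero K]
    (α β : Multiplicative (AddSubgroup.closure (F : Set L)) →* Kˣ) :
    hF.extendChar (α * β) = hF.extendChar α * hF.extendChar β := by
  simp only [extendChar, MonoidHom.mul_comp, MonoidHom.comp_mul, hF.extendByZero_mul]

theorem range_extendChar [CommGroupWithZero K] :
    Set.range (hF.extendChar (K := K)) =
      {φ | ∀ m : M, φ (.ofAdd m) ≠ 0 ↔ (m : L) ∈ F} := by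
  ext φ
  refine ⟨?_, fun hφ => ?_⟩
  · rintro ⟨α, rfl⟩ m
    by_cases h : (m : L) ∈ F
    · simp [hF.extendChar_apply_of_mem _ _ h, h]
    · simp [hF.extendChar_apply_of_notMem _ _ h, h]
  · let χ : Multiplicative F →* Kˣ :=
      IsUnit.liftRight (φ.comp (AddSubmonoid.inclusion hF.1).toMultiplicative)
        fun a => ((hφ _).2 a.toAdd.2).isUnit
    refine ⟨F.closureLocalizationMap.lift (g := χ) fun _ => Group.isUnit _,
      MonoidHom.ext fun x => ?_⟩
    obtain ⟨m, rfl⟩ := Multiplicative.ofAdd.surjective x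
    by_cases h : (m : L) ∈ F
    · rw [hF.extendChar_apply_of_mem _ _ h]
      exact congrArg Units.val (F.closureLocalizationMap.lift_eq _ (.ofAdd ⟨m, h⟩))
    · rw [hF.extendChar_apply_of_notMem _ _ h]
      exact (not_not.1 (mt (hφ _).1 h)).symm

end IsFace

end

theorem torus_orbit_of_face_general
    (L : Type) [AddCommGroup L]
    (K : Type) [Field K]
    (M : AddSubmonoid L)
    (F : AddSubmonoid L) (hF : IsFace M F) :
    let TF : Set (Multiplicative M →* K) :=
      {φ | ∀ m : M, φ (Multiplicative.ofAdd m) ≠ 0 ↔ (m : L) ∈ F}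
    ∃ Φ : (Multiplicative (AddSubgroup.closure (F : Set L)) →* Kˣ) → (Multiplicative M →* K),
      (∀ α, ∀ m : M,
        (∀ h : (m : L) ∈ F,
          Φ α (Multiplicative.ofAdd m) =
            (α (Multiplicative.ofAdd ⟨(m : L), AddSubgroup.subset_closure h⟩) : K)) ∧
        ((m : L) ∉ F → Φ α (Multiplicative.ofAdd m) = 0)) ∧
      (∀ α β, Φ (α * β) = Φ α * Φ β) ∧
      Function.Injective Φ ∧
      Set.range Φ = TF ∧
      (∀ φ ∈ TF, Φ 1 * φ = φ ∧ φ * Φ 1 = φ) ∧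
      (∀ φ ∈ TF, ∃ ψ ∈ TF, φ * ψ = Φ 1) := by
  intro TF
  have hrange : Set.range hF.extendChar = TF := hF.range_extendChar
  refine ⟨hF.extendChar,
    fun α m => ⟨hF.extendChar_apply_of_mem α m, hF.extendChar_apply_of_notMem α m⟩,
    hF.extendChar_mul, hF.extendChar_injective, hrange, ?_, ?_⟩ <;> rw [← hrange]
  · rintro _ ⟨α, rfl⟩
    simp only [← hF.extendChar_mul, one_mul, mul_one, and_self]
  · rintro _ ⟨α, rfl⟩
    exact ⟨_, ⟨α⁻¹, rfl⟩, by rw [← hF.extendChar_mul, mul_inv_cancel]⟩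

/-- For a face `F` of a saturated submonoid `M` of a lattice of finite rank and an
infinite field `K`, the set `T(F) = {α ∈ M̃ : α⁻¹(Kˣ) = F}` is a group under pointwise
multiplication with identity `e(F)`, and extension by zero gives a group isomorphism
`Φ_F : Hom(F − F, Kˣ) → T(F)`. -/
theorem torus_orbit_of_face
    (L : Type) [AddCommGroup L] [Module.Free ℤ L] [Module.Finite ℤ L]
    (K : Type) [Field K] [Infinite K]
    (M : AddSubmonoid L) (hM : IsSaturated M)
    (F : AddSubmonoid L) (hF : IsFace M F) :
    let TF : Set (Multiplicative M →* K) :=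
      {φ | ∀ m : M, φ (Multiplicative.ofAdd m) ≠ 0 ↔ (m : L) ∈ F}
    ∃ Φ : (Multiplicative (AddSubgroup.closure (F : Set L)) →* Kˣ) → (Multiplicative M →* K),
      (∀ α, ∀ m : M,
        (∀ h : (m : L) ∈ F,
          Φ α (Multiplicative.ofAdd m) =
            (α (Multiplicative.ofAdd ⟨(m : L), AddSubgroup.subset_closure h⟩) : K)) ∧
        ((m : L) ∉ F → Φ α (Multiplicative.ofAdd m) = 0)) ∧
      (∀ α β, Φ (α * β) = Φ α * Φ β) ∧
      Function.Injective Φ ∧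
      Set.range Φ = TF ∧
      (∀ φ ∈ TF, Φ 1 * φ = φ ∧ φ * Φ 1 = φ) ∧
      (∀ φ ∈ TF, ∃ ψ ∈ TF, φ * ψ = Φ 1) :=
  torus_orbit_of_face_general L K M F hF
end

section
/- Let R = τR(Θ) be a face of the Tits cone and let α ∈ Δ_re be a real root with α ∉ span(R). If μ ∈ R ∩ P is a weight with μ(h_α) = 0, then the α-string through μ inside X ∩ P is just {μ}; more generally, (μ + ℤα) ∩ X = {μ, μ−α, …, μ−μ(h_α)α} if μ(h_α) > 0, {μ} if μ(h_α) = 0, and {μ, μ+α, …, μ−μ(h_α)α} if μ(h_α) < 0. -/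
/-!
Convexity and `σ_α`-invariance of `X` put the whole segment from `μ` to
`σ_α μ = μ - μ(h_α) α` into `X`. Conversely, if `x = μ + t α ∈ X` lies on the line beyond that
segment, then `μ` lies strictly between `x` and `σ_α x = μ - (t + μ(h_α)) α`. As `R` is a face of
the cone `X`, this forces `x ∈ span R`, hence `t α ∈ span R` with `t ≠ 0`, contradicting
`α ∉ span R`.
-/

open Set

section LineThroughFace

variable {V : Type*} [AddCommGroup V] [Module ℝ V]

theorem add_smul_mem_segment {μ α : V} {t c : ℝ} (ht : t ∈ uIcc 0 c) :
    μ + t • α ∈ segment ℝ μ (μ + c • α) := by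
  have h := image_segment ℝ (AffineMap.lineMap μ (μ + α)) 0 c
  simp only [AffineMap.lineMap_apply_module', add_sub_cancel_left, zero_smul, zero_add,
    segment_eq_uIcc] at h
  rw [add_comm μ (c • α), ← h]
  exact ⟨t, ht, by simp [AffineMap.lineMap_apply_module', add_comm]⟩

theorem mem_openSegment_add_smul_sub_smul {μ α : V} {t c : ℝ} (h : 0 < t * (t + c)) :
    μ ∈ openSegment ℝ (μ + t • α) (μ - (t + c) • α) := by
  have hq : 0 < t * t := mul_self_pos.2 (by rintro rfl; simp at h)
  set s := t * (t + c) + t * t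
  have hs : s ≠ 0 := by positivity
  refine ⟨t * (t + c) / s, t * t / s, by positivity, by positivity,
    by rw [← add_div, div_self hs], ?_⟩
  match_scalars
  · rw [mul_one, mul_one, ← add_div, div_self hs]
  · field_simp; ring

theorem mul_add_pos_of_notMem_uIcc {t c : ℝ} (ht : t ∉ uIcc 0 (-c)) : 0 < t * (t + c) := by
  rw [mem_uIcc] at ht
  rcases lt_trichotomy t 0 with h | rfl | h
  · exact mul_pos_of_neg_of_neg h (by contrapose! ht; right; constructor <;> linarith)
  · exact (ht ((le_total 0 (-c)).imp (⟨le_rfl, ·⟩) (⟨·, le_rfl⟩))).elim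
  · exact mul_pos h (by contrapose! ht; left; constructor <;> linarith)

theorem mem_span_of_mem_openSegment {X R : Set V}
    (hXcone : ∀ c : ℝ, 0 ≤ c → ∀ x ∈ X, c • x ∈ X)
    (hRface : ∀ x ∈ X, ∀ y ∈ X, x + y ∈ R → x ∈ R)
    {x y μ : V} (hx : x ∈ X) (hy : y ∈ X) (hμx : μ ∈ openSegment ℝ x y) (hμ : μ ∈ R) :
    x ∈ Submodule.span ℝ R := by
  obtain ⟨a, b, ha, hb, -, rfl⟩ := hμx
  have hax : a • x ∈ R := hRface _ (hXcone a ha.le x hx) _ (hXcone b hb.le y hy) hμ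
  exact (Submodule.smul_mem_iff _ ha.ne').1 (Submodule.subset_span hax)

theorem add_smul_mem_iff_mem_uIcc {X R : Set V} {f : V →ₗ[ℝ] ℝ} {α μ : V}
    (hXconv : Convex ℝ X)
    (hXcone : ∀ c : ℝ, 0 ≤ c → ∀ x ∈ X, c • x ∈ X)
    (hXrefl : ∀ v ∈ X, v - f v • α ∈ X)
    (hfα : f α = 2)
    (hRX : R ⊆ X)
    (hRface : ∀ x ∈ X, ∀ y ∈ X, x + y ∈ R → x ∈ R)
    (hα : α ∉ Submodule.span ℝ R)
    (hμ : μ ∈ R) (t : ℝ) :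
    μ + t • α ∈ X ↔ t ∈ uIcc 0 (-f μ) := by
  refine ⟨fun hx => ?_, fun ht => ?_⟩
  · by_contra ht
    have hpos := mul_add_pos_of_notMem_uIcc ht
    have hfx : f (μ + t • α) = f μ + 2 * t := by
      rw [map_add, map_smul, hfα, smul_eq_mul, mul_comm]
    have hy : μ - (t + f μ) • α ∈ X := by
      convert hXrefl _ hx using 1
      rw [hfx]
      module
    have hx_span := mem_span_of_mem_openSegment hXcone hRface hx hy
      (mem_openSegment_add_smul_sub_smul hpos) hμ
    have htα : t • α ∈ Submodule.span ℝ R := by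
      simpa using sub_mem hx_span (Submodule.subset_span hμ)
    exact hα ((Submodule.smul_mem_iff _ (left_ne_zero_of_mul hpos.ne')).1 htα)
  · have hσμ : μ + (-f μ) • α ∈ X := by
      simpa [neg_smul, ← sub_eq_add_neg] using hXrefl μ (hRX hμ)
    exact hXconv.segment_subset (hRX hμ) hσμ (add_smul_mem_segment ht)

end LineThroughFace

theorem root_string_through_face_general
    (V : Type) [AddCommGroup V] [Module ℝ V]
    (X R : Set V) (f : V →ₗ[ℝ] ℝ) (α : V)
    (hXconv : Convex ℝ X)
    (hXcone : ∀ (c : ℝ), 0 ≤ c → ∀ x ∈ X, c • x ∈ X)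
    (hXrefl : ∀ v ∈ X, v - f v • α ∈ X)
    (hfα : f α = 2)
    (hRX : R ⊆ X)
    (hRface : ∀ x ∈ X, ∀ y ∈ X, x + y ∈ R → x ∈ R)
    (hα : α ∉ Submodule.span ℝ R)
    (μ : V) (hμ : μ ∈ R) (m : ℤ) (hm : f μ = (m : ℝ)) :
    ∀ z : ℤ, μ + z • α ∈ X ↔
      (z = 0 ∨ (0 < m ∧ -m ≤ z ∧ z ≤ 0) ∨ (m < 0 ∧ 0 ≤ z ∧ z ≤ -m)) := by
  intro z
  rw [← Int.cast_smul_eq_zsmul ℝ z α,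
    add_smul_mem_iff_mem_uIcc hXconv hXcone hXrefl hfα hRX hRface hα hμ, hm, mem_uIcc]
  norm_cast
  omega

/-- Root strings through a weight in a face of the Tits cone.

`X` is the Tits cone (a `W`-invariant convex cone), `R` a face of `X`, `α` a real root
with coroot pairing `f` (so `f v = v(h_α)` and the reflection is `σ_α v = v - f v • α`),
and `α ∉ span R`.  For `μ ∈ R` with `μ(h_α) = m ∈ ℤ`, the α-string `(μ + ℤα) ∩ X` is
`{μ, μ−α, …, μ−mα}` if `m > 0`, `{μ}` if `m = 0`, and `{μ, μ+α, …, μ−mα}` if `m < 0`. -/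
theorem root_string_through_face
    (V : Type) [AddCommGroup V] [Module ℝ V]
    (X R : Set V) (f : V →ₗ[ℝ] ℝ) (α : V)
    (hXconv : Convex ℝ X)
    (hXcone : ∀ (c : ℝ), 0 ≤ c → ∀ x ∈ X, c • x ∈ X)
    (hXrefl : ∀ v ∈ X, v - f v • α ∈ X)
    (hfα : f α = 2)
    (hRX : R ⊆ X)
    (hRface : ∀ x ∈ X, ∀ y ∈ X, x + y ∈ R → x ∈ R)
    (hRcone : ∀ (c : ℝ), 0 ≤ c → ∀ x ∈ R, c • x ∈ R)
    (hα : α ∉ Submodule.span ℝ R)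
    (μ : V) (hμ : μ ∈ R) (m : ℤ) (hm : f μ = (m : ℝ)) :
    ∀ z : ℤ, μ + z • α ∈ X ↔
      (z = 0 ∨ (0 < m ∧ -m ≤ z ∧ z ≤ 0) ∨ (m < 0 ∧ 0 ≤ z ∧ z ≤ -m)) :=
  root_string_through_face_general V X R f α hXconv hXcone hXrefl hfα hRX hRface hα μ hμ m hm
end

section
/- Let J ⊆ I and Λ ∈ P⁺. The subgroup U^J := ⋂_{σ∈W_J} σU⁺σ⁻¹ fixes every point of L_J(Λ) := U(n_J⁻)·L(Λ)_Λ pointwise. -/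
attribute [local instance] LieRing.ofAssociativeRing

/-! The fixed points of `U` form a submodule `V`, and the endomorphisms stabilizing `V` form a
Lie subalgebra of `End(M)`. Each `y ∈ A` stabilizes `V`: for `x ∈ V` and `u ∈ U`, normality gives
`u (exp(t y) x) = exp(t y) (u' x) = exp(t y) x` for every `t`, a polynomial identity in `t`
whose linear coefficient reads `u (y x) = y x`; since `F` is infinite, coefficients can be
compared. Hence all of `n_J⁻ = lieSpan A` stabilizes `V`, and `V ∋ vΛ` contains `U(n_J⁻) vΛ`. -/

open Finset Nat

section

variable {R M : Type*} [CommRing R] [AddCommGroup M] [Module R M]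

def fixedSubmodule (U : Set (Module.End R M)) : Submodule R M :=
  ⨅ u ∈ U, LinearMap.ker (u - 1)

theorem mem_fixedSubmodule {U : Set (Module.End R M)} {x : M} :
    x ∈ fixedSubmodule U ↔ ∀ u ∈ U, u x = x := by
  simp [fixedSubmodule, sub_eq_zero]

def Submodule.lieStabilizer (p : Submodule R M) : LieSubalgebra R (Module.End R M) where
  carrier := {z | ∀ x ∈ p, z x ∈ p}
  add_mem' ha hb x hx := p.add_mem (ha x hx) (hb x hx)
  zero_mem' _ _ := p.zero_mem
  smul_mem' t _ ha x hx := p.smul_mem t (ha x hx)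
  lie_mem' ha hb x hx := by
    rw [Ring.lie_def]
    exact p.sub_mem (ha _ (hb x hx)) (hb _ (ha x hx))

theorem List.foldr_apply_mem {p : Submodule R M} {l : List (Module.End R M)}
    (hl : ∀ z ∈ l, ∀ x ∈ p, z x ∈ p) {v : M} (hv : v ∈ p) :
    l.foldr (fun z x => z x) v ∈ p := by
  induction l with
  | nil => exact hv
  | cons z l ih =>
    exact hl z (List.mem_cons_self ..) _ (ih fun w hw => hl w (List.mem_cons_of_mem _ hw))

end

section

variable {F M : Type*} [Field F] [AddCommGroup M] [Module F M]

theorem eq_zero_of_forall_sum_pow_smul_eq_zero [Infinite F] {N : ℕ} {c : ℕ → M}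
    (h : ∀ t : F, ∑ k ∈ range N, t ^ k • c k = 0) {k : ℕ} (hk : k < N) : c k = 0 := by
  refine (Module.forall_dual_apply_eq_zero_iff F (c k)).1 fun f => ?_
  let p : Polynomial F := ∑ j ∈ range N, Polynomial.monomial j (f (c j))
  have hp : p = 0 := Polynomial.funext fun t => by
    simpa [p, Polynomial.eval_finsetSum, mul_comm] using congrArg f (h t)
  simpa [p, Polynomial.finsetSum_coeff, Polynomial.coeff_monomial, hk] using
    congrArg (Polynomial.coeff · k) hp

theorem exists_apply_eq_sum_exp {y : Module.End F M} {expo : F → Module.End F M} {x : M}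
    (hexp : ∀ t : F, ∃ N : ℕ, (∀ k ≥ N, (y ^ k) x = 0) ∧
      expo t x = ∑ k ∈ range N, (t ^ k / (k ! : F)) • (y ^ k) x) :
    ∃ N, 1 < N ∧ ∀ t : F, expo t x = ∑ k ∈ range N, (t ^ k / (k ! : F)) • (y ^ k) x := by
  obtain ⟨N₀, hN₀, -⟩ := hexp 0
  refine ⟨max N₀ 2, by omega, fun t => ?_⟩
  obtain ⟨Nt, hNt, he⟩ := hexp t
  have hvanish : ∀ n, (∀ k ≥ n, (y ^ k) x = 0) →
      ∀ k ≥ n, (t ^ k / (k ! : F)) • (y ^ k) x = 0 := fun n hn k hk => by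
    rw [hn k hk, smul_zero]
  rw [he, ← eventually_constant_sum (hvanish Nt hNt) (le_max_left Nt (max N₀ 2)),
    eventually_constant_sum (hvanish _ fun k hk => hN₀ k (le_of_max_le_left hk)) (le_max_right _ _)]

theorem apply_mem_fixedSubmodule_of_exp [Infinite F] {U : Set (Module.End F M)}
    {y : Module.End F M} {expo : F → Module.End F M}
    (hnormal : ∀ u ∈ U, ∀ t : F, ∃ u' ∈ U, u * expo t = expo t * u')
    {x : M} (hx : x ∈ fixedSubmodule U) {N : ℕ} (hN : 1 < N)
    (hexp : ∀ t : F, expo t x = ∑ k ∈ range N, (t ^ k / (k ! : F)) • (y ^ k) x) :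
    y x ∈ fixedSubmodule U := by
  rw [mem_fixedSubmodule] at hx ⊢
  intro u hu
  have hexp_fixed (t : F) : u (expo t x) = expo t x := by
    obtain ⟨u', hu', hcomm⟩ := hnormal u hu t
    rw [← Module.End.mul_apply, hcomm, Module.End.mul_apply, hx u' hu']
  have hcoeff (t : F) :
      ∑ k ∈ range N, t ^ k • ((k ! : F)⁻¹ • (u ((y ^ k) x) - (y ^ k) x)) = 0 := by
    have h := hexp_fixed t
    rw [hexp t, map_sum] at h
    simp only [map_smul] at h
    simp only [smul_smul, ← div_eq_mul_inv, smul_sub, sum_sub_distrib, h, sub_self]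
  simpa [sub_eq_zero] using eq_zero_of_forall_sum_pow_smul_eq_zero hcoeff hN

end

/-- `M = L(Λ)`, `A` spans the root spaces `g_β`, `β ∈ (Δ_J)⁻_re`, so that `lieSpan A = n_J⁻`
inside `End(M)`, `U = U^J`, and `expo y t = exp(t y)`. -/
theorem UJ_fixes_LJ_general
    (F : Type) [Field F] [Infinite F]
    (M : Type) [AddCommGroup M] [Module F M]
    (A U : Set (Module.End F M))
    (expo : Module.End F M → F → Module.End F M)
    (vΛ : M)
    (hexp : ∀ y ∈ A, ∀ t : F, ∀ m : M, ∃ N : ℕ,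
      (∀ k ≥ N, (y ^ k) m = 0) ∧
      expo y t m = ∑ k ∈ Finset.range N, ((t ^ k) / (Nat.factorial k : F)) • (y ^ k) m)
    (hnormal : ∀ u ∈ U, ∀ y ∈ A, ∀ t : F, ∃ u' ∈ U, u * expo y t = expo y t * u')
    (hfix : ∀ u ∈ U, u vΛ = vΛ) :
    ∀ u ∈ U, ∀ m ∈ Submodule.span F
      {m : M | ∃ l : List (Module.End F M),
        (∀ x ∈ l, x ∈ LieSubalgebra.lieSpan F (Module.End F M) A) ∧
        m = l.foldr (fun x v => x v) vΛ},
      u m = m := by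
  have hA : A ⊆ (fixedSubmodule U).lieStabilizer := fun y hy x hx => by
    obtain ⟨N, hN, hsum⟩ := exists_apply_eq_sum_exp fun t => hexp y hy t x
    exact apply_mem_fixedSubmodule_of_exp (fun u hu t => hnormal u hu y hy t) hx hN hsum
  have hspan : Submodule.span F
      {m : M | ∃ l : List (Module.End F M),
        (∀ x ∈ l, x ∈ LieSubalgebra.lieSpan F (Module.End F M) A) ∧
        m = l.foldr (fun x v => x v) vΛ} ≤ fixedSubmodule U := by
    rw [Submodule.span_le]
    rintro _ ⟨l, hl, rfl⟩
    exact List.foldr_apply_mem (fun z hz => LieSubalgebra.lieSpan_le.2 hA (hl z hz))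
      (mem_fixedSubmodule.2 hfix)
  exact fun u hu m hm => mem_fixedSubmodule.1 (hspan hm) u hu

/-- `U^J` fixes `L_J(Λ) = U(n_J⁻)·L(Λ)_Λ` pointwise.  Abstractly: `M = L(Λ)` is a module
over the infinite field `F` of characteristic `0`, `A` is the set of the root operators
spanning the root spaces `g_β`, `β ∈ (Δ_J)⁻_re` (each acting locally nilpotently), which
generates the Lie algebra `n_J⁻` inside `End(M)`; `expo y t` is the exponential
`exp(t·y)`; `U` (the group `U^J`) fixes the highest weight vector `vΛ`, is closed under
multiplication, and is normalized by all `exp(t·y)`, `y ∈ A`.  Then every `u ∈ U` fixes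
every element of the span of the vectors `x₁ ⋯ xₙ vΛ`, `xᵢ ∈ n_J⁻`. -/
theorem UJ_fixes_LJ
    (F : Type) [Field F] [CharZero F] [Infinite F]
    (M : Type) [AddCommGroup M] [Module F M]
    (A U : Set (Module.End F M))
    (expo : Module.End F M → F → Module.End F M)
    (vΛ : M)
    (hnil : ∀ y ∈ A, ∀ m : M, ∃ N : ℕ, (y ^ N) m = 0)
    (hexp : ∀ y ∈ A, ∀ t : F, ∀ m : M, ∃ N : ℕ,
      (∀ k ≥ N, (y ^ k) m = 0) ∧
      expo y t m = ∑ k ∈ Finset.range N, ((t ^ k) / (Nat.factorial k : F)) • (y ^ k) m)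
    (hUmul : ∀ u ∈ U, ∀ u' ∈ U, u * u' ∈ U)
    (hnormal : ∀ u ∈ U, ∀ y ∈ A, ∀ t : F, ∃ u' ∈ U, u * expo y t = expo y t * u')
    (hfix : ∀ u ∈ U, u vΛ = vΛ) :
    ∀ u ∈ U, ∀ m ∈ Submodule.span F
      {m : M | ∃ l : List (Module.End F M),
        (∀ x ∈ l, x ∈ LieSubalgebra.lieSpan F (Module.End F M) A) ∧
        m = l.foldr (fun x v => x v) vΛ},
      u m = m :=
  UJ_fixes_LJ_general F M A U expo vΛ hexp hnormal hfix
end
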